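/- Let h : ℂ[∂, λ] be a polynomial in two variables, let a, a', b ∈ ℂ, and suppose that for all ∂, λ, μ: h(∂+λ, μ)·(∂ + a'λ + b) - (∂ + μ + aλ + b)·h(∂, μ) = (λ - μ)·h(∂, λ+μ). If moreover h(∂, 0) = 0 for all ∂, then h is identically zero. -/
import Mathlib


open MvPolynomial

/-- If a two-variable polynomial `h(∂,λ)` satisfies
`h(∂+λ,μ)(∂+a'λ+b) - (∂+μ+aλ+b)h(∂,μ) = (λ-μ)h(∂,λ+μ)` and `h(∂,0) = 0`,
then `h` is identically zero. -/
theorem stmt3 (h : MvPolynomial (Fin 2) ℂ) (a a' b : ℂ)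
    (H : ∀ x l m : ℂ,
      eval ![x + l, m] h * (x + a' * l + b) - (x + m + a * l + b) * eval ![x, m] h
        = (l - m) * eval ![x, l + m] h)
    (H0 : ∀ x : ℂ, eval ![x, 0] h = 0) :
    h = 0 := by
  have key : ∀ x l : ℂ, eval ![x, l] h = 0 := by
    intro x l
    rcases eq_or_ne l 0 with rfl | hl
    · exact H0 x
    · have := H x l 0
      rw [H0, H0] at this
      simp only [mul_zero, zero_mul, sub_zero, add_zero] at this
      exact (mul_eq_zero.mp this.symm).resolve_left hl
  apply MvPolynomial.funext
  intro f
  have : f = ![f 0, f 1] := by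
    funext i; fin_cases i <;> simp
  rw [this, key]; simp
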